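/- Assume F_0 is the trivial σ-algebra {∅, Ω} and let ξ be a square-integrable F_N-measurable random variable. Then there exist: a process Y = (Y_n) adapted to 𝔽 with each Y_n square-integrable; an admissible ℍ-predictable process Z = (Z_k); and an 𝔽-martingale O = (O_n) with O_0 = 0, each O_n square-integrable, and E[O_N · Σ_{k=0}^{N−1} φ_k·ΔM_k] = 0 for every admissible ℍ-predictable φ; such that for every n ≤ N, Y_n = ξ − Σ_{k=n}^{N−1} Z_k·ΔM_k − (O_N − O_n) P-almost surely. Moreover the solution is unique: for any two such triples (Y, Z, O) and (Y', Z', O') one has Y_n = Y'_n P-a.s. and O_n = O'_n P-a.s. for every n ≤ N, and Z_k·ΔM_k = Z'_k·ΔM_k P-a.s. for every k < N. -/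

import Mathlib

/-!
Take `Z_k = E[ξ ΔM_k | ℍ_k] / E[ΔM_k² | ℍ_k]`. Conditional Cauchy–Schwarz makes `Z_k ΔM_k`
square-integrable and the `L²`-projection of `ξ` onto `{φ ΔM_k : φ ℍ_k-measurable}`. Martingale
increments of different times are orthogonal, so `Σ_k Z_k ΔM_k` is the projection of `ξ` onto all
admissible stochastic integrals. The residual `G = ξ - Σ_k Z_k ΔM_k` is therefore orthogonal to
them, so `O_n = E[G | 𝔽_n] - E G` is the orthogonal martingale part, and `Y` is read off from the
equation.

For uniqueness, `Y 0` is deterministic because `𝔽 0` is trivial, so it equals `E ξ` for both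
solutions. Hence `O' N - O N = Σ_k (Z_k - Z'_k) ΔM_k` is orthogonal to itself and vanishes; by
orthogonality of the increments each `(Z_k - Z'_k) ΔM_k` vanishes, and the martingale property
transports `O N = O' N` back to every `n ≤ N`.
-/

open MeasureTheory

/-- `BSDESol P 𝔽 ℍ M N ξ Y Z O` says that `(Y, Z)` (with orthogonal martingale part `O`)
solves the linear backward stochastic difference equation
`Y_n = ξ − Σ_{k=n}^{N−1} Z_k ΔM_k − (O_N − O_n)` under the partial information `ℍ`:
`Y` is `𝔽`-adapted with each `Y n` square-integrable, `Z` is an admissible `ℍ`-predictable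
process, and `O` is a square-integrable `𝔽`-martingale with `O 0 = 0` a.s. satisfying
`E[O_N · Σ_{k<N} φ_k ΔM_k] = 0` for every admissible `ℍ`-predictable `φ`. -/
def BSDESol {Ω : Type*} {mΩ : MeasurableSpace Ω} (P : Measure Ω)
    (𝔽 ℍ : Filtration ℕ mΩ) (M : ℕ → Ω → ℝ) (N : ℕ)
    (ξ : Ω → ℝ) (Y : ℕ → Ω → ℝ) (Z : ℕ → Ω → ℝ) (O : ℕ → Ω → ℝ) : Prop :=
  StronglyAdapted 𝔽 Y ∧ (∀ n, MemLp (Y n) 2 P) ∧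
  (∀ k, StronglyMeasurable[ℍ k] (Z k)) ∧
  (∀ k, MemLp (fun ω => Z k ω * (M (k + 1) ω - M k ω)) 2 P) ∧
  Martingale O 𝔽 P ∧ (O 0 =ᵐ[P] 0) ∧ (∀ n, MemLp (O n) 2 P) ∧
  (∀ φ : ℕ → Ω → ℝ, (∀ k, StronglyMeasurable[ℍ k] (φ k)) →
    (∀ k, MemLp (fun ω => φ k ω * (M (k + 1) ω - M k ω)) 2 P) →
    ∫ ω, O N ω * ∑ k ∈ Finset.range N, φ k ω * (M (k + 1) ω - M k ω) ∂P = 0) ∧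
  (∀ n ≤ N, Y n =ᵐ[P] fun ω =>
    ξ ω - (∑ k ∈ Finset.Ico n N, Z k ω * (M (k + 1) ω - M k ω)) - (O N ω - O n ω))

open Filter Topology

section CondExp

variable {Ω : Type*} {m mΩ : MeasurableSpace Ω} {P : Measure Ω}

lemma ae_condExp_sq_add_mul_add_sq_nonneg {f g : Ω → ℝ} (hf : MemLp f 2 P) (hg : MemLp g 2 P)
    (x : ℝ) :
    ∀ᵐ ω ∂P, 0 ≤ P[fun ω => f ω ^ 2|m] ω + 2 * x * P[fun ω => f ω * g ω|m] ω
      + x ^ 2 * P[fun ω => g ω ^ 2|m] ω := by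
  have hfg : Integrable (fun ω => f ω * g ω) P := hf.integrable_mul hg
  have hsq : (fun ω => (f ω + x * g ω) ^ 2) = (fun ω => f ω ^ 2)
      + (2 * x) • (fun ω => f ω * g ω) + x ^ 2 • fun ω => g ω ^ 2 := by
    ext ω
    simp only [Pi.add_apply, Pi.smul_apply, smul_eq_mul]
    ring
  have hnonneg : 0 ≤ᵐ[P] P[fun ω => (f ω + x * g ω) ^ 2|m] :=
    condExp_nonneg (ae_of_all _ fun ω => sq_nonneg _)
  rw [hsq] at hnonneg
  filter_upwards [hnonneg,
    condExp_add (hf.integrable_sq.add (hfg.smul (2 * x))) (hg.integrable_sq.smul (x ^ 2)) m,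
    condExp_add hf.integrable_sq (hfg.smul (2 * x)) m,
    condExp_smul (μ := P) (2 * x) (fun ω => f ω * g ω) m,
    condExp_smul (μ := P) (x ^ 2) (fun ω => g ω ^ 2) m] with ω h h₁ h₂ h₃ h₄
  simp only [Pi.add_apply, Pi.smul_apply, Pi.zero_apply, smul_eq_mul] at h h₁ h₂ h₃ h₄
  rwa [h₁, h₂, h₃, h₄] at h

lemma condExp_mul_sq_le {f g : Ω → ℝ} (hf : MemLp f 2 P) (hg : MemLp g 2 P) :
    ∀ᵐ ω ∂P, P[fun ω => f ω * g ω|m] ω ^ 2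
      ≤ P[fun ω => f ω ^ 2|m] ω * P[fun ω => g ω ^ 2|m] ω := by
  have hrat : ∀ᵐ ω ∂P, ∀ q : ℚ, 0 ≤ P[fun ω => f ω ^ 2|m] ω
      + 2 * q * P[fun ω => f ω * g ω|m] ω + q ^ 2 * P[fun ω => g ω ^ 2|m] ω :=
    ae_all_iff.2 fun q => ae_condExp_sq_add_mul_add_sq_nonneg hf hg q
  filter_upwards [hrat] with ω hω
  -- the exceptional null set depends on `x`, so pass through the countable dense set `ℚ`
  have hquad : ∀ x : ℝ, 0 ≤ P[fun ω => g ω ^ 2|m] ω * (x * x)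
      + 2 * P[fun ω => f ω * g ω|m] ω * x + P[fun ω => f ω ^ 2|m] ω := fun x =>
    Rat.denseRange_cast.induction_on x (isClosed_le continuous_const (by fun_prop))
      fun q => by linarith [hω q]
  have hdisc := discrim_le_zero hquad
  rw [discrim] at hdisc
  nlinarith

end CondExp

section CondRegression

variable {Ω : Type*} {m mΩ : MeasurableSpace Ω} {P : Measure Ω}

lemma integrable_mul_of_ae_mul_condExp_le [IsFiniteMeasure P] (hm : m ≤ mΩ) {f g b : Ω → ℝ}
    (hf : StronglyMeasurable[m] f) (hf₀ : 0 ≤ f) (hg : Integrable g P) (hg₀ : 0 ≤ g)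
    (hb : Integrable b P) (hfgb : ∀ᵐ ω ∂P, f ω * P[g|m] ω ≤ b ω) :
    Integrable (fun ω => f ω * g ω) P := by
  set f' : ℕ → Ω → ℝ := fun n ω => min (f ω) n
  have hf' : ∀ n, StronglyMeasurable[m] (f' n) := fun n =>
    (continuous_id.min continuous_const).comp_stronglyMeasurable hf
  have hf'g : ∀ n, Integrable (fun ω => f' n ω * g ω) P := fun n =>
    hg.bdd_mul ((hf' n).mono hm).aestronglyMeasurable (c := n) (ae_of_all _ fun ω => by
      rw [Real.norm_eq_abs, abs_of_nonneg (le_min (hf₀ ω) n.cast_nonneg)]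
      exact min_le_right _ _)
  have hbound : ∀ n, ∫ ω, f' n ω * g ω ∂P ≤ ∫ ω, b ω ∂P := fun n => by
    have hpull : P[f' n * g|m] =ᵐ[P] f' n * P[g|m] :=
      condExp_mul_of_stronglyMeasurable_left (hf' n) (hf'g n) hg
    calc ∫ ω, f' n ω * g ω ∂P = ∫ ω, P[f' n * g|m] ω ∂P := (integral_condExp hm).symm
      _ = ∫ ω, (f' n * P[g|m]) ω ∂P := integral_congr_ae hpull
      _ ≤ ∫ ω, b ω ∂P := by
        refine integral_mono_ae (integrable_condExp.congr hpull) hb ?_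
        filter_upwards [hfgb, condExp_nonneg (m := m) (ae_of_all P hg₀)] with ω hω hc
        exact (mul_le_mul_of_nonneg_right (min_le_left _ _) hc).trans hω
  -- monotone convergence along the truncations `min f n`, which reach `f ω` for `n ≥ f ω`
  have hlim : Tendsto (fun n => ∫⁻ ω, ENNReal.ofReal (f' n ω * g ω) ∂P) atTop
      (𝓝 (∫⁻ ω, ENNReal.ofReal (f ω * g ω) ∂P)) := by
    refine lintegral_tendsto_of_tendsto_of_monotone
      (fun n => (hf'g n).aemeasurable.ennreal_ofReal) (ae_of_all _ fun ω i j hij => ?_)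
      (ae_of_all _ fun ω => tendsto_atTop_of_eventually_const (i₀ := ⌈f ω⌉₊) fun n hn => ?_)
    · exact ENNReal.ofReal_le_ofReal <| mul_le_mul_of_nonneg_right
        (min_le_min le_rfl (Nat.cast_le.2 hij)) (hg₀ ω)
    · simp only [f', min_eq_left ((Nat.le_ceil (f ω)).trans (Nat.cast_le.2 hn))]
  refine ⟨(hf.mono hm).aestronglyMeasurable.mul hg.1, ?_⟩
  rw [hasFiniteIntegral_iff_ofReal (ae_of_all _ fun ω => mul_nonneg (hf₀ ω) (hg₀ ω))]
  refine (le_of_tendsto' hlim fun n => ?_).trans_lt (ENNReal.ofReal_lt_top (r := ∫ ω, b ω ∂P))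
  rw [← ofReal_integral_eq_lintegral_ofReal (hf'g n)
    (ae_of_all _ fun ω => mul_nonneg (le_min (hf₀ ω) n.cast_nonneg) (hg₀ ω))]
  exact ENNReal.ofReal_le_ofReal (hbound n)

/-- The conditional least-squares coefficient of `ξ` on `Δ` given `m`. Where `E[Δ² | m] = 0`
the division returns `0`, and there `E[ξ Δ | m] = 0` as well by conditional Cauchy–Schwarz. -/
noncomputable def condRegCoeff (P : Measure Ω) (m : MeasurableSpace Ω) (ξ Δ : Ω → ℝ) :
    Ω → ℝ :=
  fun ω => P[fun ω => ξ ω * Δ ω|m] ω / P[fun ω => Δ ω ^ 2|m] ω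

variable {ξ Δ : Ω → ℝ}

lemma stronglyMeasurable_condRegCoeff : StronglyMeasurable[m] (condRegCoeff P m ξ Δ) :=
  (stronglyMeasurable_condExp.measurable.div
    stronglyMeasurable_condExp.measurable).stronglyMeasurable

lemma condRegCoeff_mul_condExp_sq (hξ : MemLp ξ 2 P) (hΔ : MemLp Δ 2 P) :
    ∀ᵐ ω ∂P, condRegCoeff P m ξ Δ ω * P[fun ω => Δ ω ^ 2|m] ω
      = P[fun ω => ξ ω * Δ ω|m] ω := by
  filter_upwards [condExp_mul_sq_le (m := m) hξ hΔ] with ω hCS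
  by_cases hc : P[fun ω => Δ ω ^ 2|m] ω = 0
  · rw [hc, mul_zero] at hCS ⊢
    exact (pow_eq_zero_iff two_ne_zero).1 (le_antisymm hCS (sq_nonneg _)) |>.symm
  · exact div_mul_cancel₀ _ hc

lemma condRegCoeff_sq_mul_condExp_sq_le (hξ : MemLp ξ 2 P) (hΔ : MemLp Δ 2 P) :
    ∀ᵐ ω ∂P, condRegCoeff P m ξ Δ ω ^ 2 * P[fun ω => Δ ω ^ 2|m] ω
      ≤ P[fun ω => ξ ω ^ 2|m] ω := by
  filter_upwards [condExp_mul_sq_le (m := m) hξ hΔ,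
    condExp_nonneg (m := m) (ae_of_all P fun ω => sq_nonneg (Δ ω)),
    condExp_nonneg (m := m) (ae_of_all P fun ω => sq_nonneg (ξ ω))] with ω hCS hc hb
  rcases hc.eq_or_lt with hc | hc
  · simpa [← hc] using hb
  · rw [condRegCoeff, div_pow, div_mul_eq_mul_div, sq (P[fun ω => Δ ω ^ 2|m] ω),
      mul_div_mul_right _ _ hc.ne', div_le_iff₀ hc]
    exact hCS

lemma memLp_condRegCoeff_mul [IsFiniteMeasure P] (hm : m ≤ mΩ) (hξ : MemLp ξ 2 P)
    (hΔ : MemLp Δ 2 P) : MemLp (fun ω => condRegCoeff P m ξ Δ ω * Δ ω) 2 P := by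
  have hmeas : AEStronglyMeasurable (fun ω => condRegCoeff P m ξ Δ ω * Δ ω) P :=
    (stronglyMeasurable_condRegCoeff.mono hm).aestronglyMeasurable.mul hΔ.1
  refine (memLp_two_iff_integrable_sq hmeas).2 ?_
  simp_rw [mul_pow]
  exact integrable_mul_of_ae_mul_condExp_le hm (stronglyMeasurable_condRegCoeff.pow 2)
    (fun ω => sq_nonneg _) hΔ.integrable_sq (fun ω => sq_nonneg _) integrable_condExp
    (condRegCoeff_sq_mul_condExp_sq_le hξ hΔ)

lemma integral_condRegCoeff_mul_mul [IsFiniteMeasure P] (hm : m ≤ mΩ) (hξ : MemLp ξ 2 P)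
    (hΔ : MemLp Δ 2 P) {φ : Ω → ℝ} (hφ : StronglyMeasurable[m] φ)
    (hφΔ : MemLp (fun ω => φ ω * Δ ω) 2 P) :
    ∫ ω, (condRegCoeff P m ξ Δ ω * Δ ω) * (φ ω * Δ ω) ∂P = ∫ ω, ξ ω * (φ ω * Δ ω) ∂P := by
  set Z := condRegCoeff P m ξ Δ
  have hZΔ := memLp_condRegCoeff_mul hm hξ hΔ
  have hpull₁ : P[(fun ω => Z ω * φ ω) * fun ω => Δ ω ^ 2|m]
      =ᵐ[P] (fun ω => Z ω * φ ω) * P[fun ω => Δ ω ^ 2|m] :=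
    condExp_mul_of_stronglyMeasurable_left (stronglyMeasurable_condRegCoeff.mul hφ)
      ((hZΔ.integrable_mul hφΔ).congr (ae_of_all _ fun ω => by simp only [Pi.mul_apply]; ring))
      hΔ.integrable_sq
  have hpull₂ : P[φ * fun ω => ξ ω * Δ ω|m] =ᵐ[P] φ * P[fun ω => ξ ω * Δ ω|m] :=
    condExp_mul_of_stronglyMeasurable_left hφ
      ((hξ.integrable_mul hφΔ).congr (ae_of_all _ fun ω => by simp only [Pi.mul_apply]; ring))
      (hξ.integrable_mul hΔ)
  calc ∫ ω, (Z ω * Δ ω) * (φ ω * Δ ω) ∂P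
      = ∫ ω, ((fun ω => Z ω * φ ω) * fun ω => Δ ω ^ 2) ω ∂P :=
        integral_congr_ae (ae_of_all _ fun ω => by simp only [Pi.mul_apply]; ring)
    _ = ∫ ω, ((fun ω => Z ω * φ ω) * P[fun ω => Δ ω ^ 2|m]) ω ∂P :=
        (integral_condExp hm).symm.trans (integral_congr_ae hpull₁)
    _ = ∫ ω, (φ * P[fun ω => ξ ω * Δ ω|m]) ω ∂P := by
        refine integral_congr_ae ?_
        filter_upwards [condRegCoeff_mul_condExp_sq (m := m) hξ hΔ] with ω hω
        simp only [Pi.mul_apply, ← hω]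
        ring
    _ = ∫ ω, ξ ω * (φ ω * Δ ω) ∂P :=
        (integral_congr_ae hpull₂).symm.trans <| (integral_condExp hm).trans <|
          integral_congr_ae (ae_of_all _ fun ω => by simp only [Pi.mul_apply]; ring)

end CondRegression

namespace MeasureTheory

variable {Ω : Type*} {mΩ : MeasurableSpace Ω} {P : Measure Ω} [IsFiniteMeasure P]
  {𝔽 : Filtration ℕ mΩ} {M : ℕ → Ω → ℝ}

lemma StronglyAdapted.stronglyMeasurable_sum_mul_increment (hM : StronglyAdapted 𝔽 M)
    {φ : ℕ → Ω → ℝ} (hφ : ∀ k, StronglyMeasurable[𝔽 k] (φ k)) (n : ℕ) :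
    StronglyMeasurable[𝔽 n] fun ω => ∑ k ∈ Finset.range n, φ k ω * (M (k + 1) ω - M k ω) := by
  refine Finset.stronglyMeasurable_fun_sum _ fun k hk => ?_
  have hkn : k < n := Finset.mem_range.1 hk
  exact ((hφ k).mono (𝔽.mono hkn.le)).mul
    (((hM (k + 1)).mono (𝔽.mono hkn)).sub ((hM k).mono (𝔽.mono hkn.le)))

lemma Martingale.integral_mul_increment_eq_zero (hM : Martingale M 𝔽 P) {k : ℕ} {h : Ω → ℝ}
    (hh : StronglyMeasurable[𝔽 k] h)
    (hint : Integrable (fun ω => h ω * (M (k + 1) ω - M k ω)) P) :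
    ∫ ω, h ω * (M (k + 1) ω - M k ω) ∂P = 0 := by
  have hΔ : P[M (k + 1) - M k|𝔽 k] =ᵐ[P] 0 := by
    filter_upwards [condExp_sub (hM.integrable (k + 1)) (hM.integrable k) (𝔽 k),
      hM.condExp_ae_eq k.le_succ] with ω h₁ h₂
    rw [h₁, Pi.sub_apply, h₂, condExp_of_stronglyMeasurable (𝔽.le k) (hM.stronglyAdapted k)
      (hM.integrable k), Pi.zero_apply, sub_self]
  have hpull : P[h * (M (k + 1) - M k)|𝔽 k] =ᵐ[P] h * P[M (k + 1) - M k|𝔽 k] :=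
    condExp_mul_of_stronglyMeasurable_left hh hint ((hM.integrable (k + 1)).sub (hM.integrable k))
  have hzero : h * P[M (k + 1) - M k|𝔽 k] =ᵐ[P] 0 :=
    hΔ.mono fun ω hω => by simp [hω]
  calc ∫ ω, h ω * (M (k + 1) ω - M k ω) ∂P = ∫ ω, P[h * (M (k + 1) - M k)|𝔽 k] ω ∂P :=
        (integral_condExp (𝔽.le k)).symm
    _ = 0 := by rw [integral_congr_ae (hpull.trans hzero)]; simp

lemma Martingale.integral_sum_mul_increment_eq_zero (hM : Martingale M 𝔽 P)
    {φ : ℕ → Ω → ℝ} (hφ : ∀ k, StronglyMeasurable[𝔽 k] (φ k))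
    (hφΔ : ∀ k, Integrable (fun ω => φ k ω * (M (k + 1) ω - M k ω)) P) (s : Finset ℕ) :
    ∫ ω, ∑ k ∈ s, φ k ω * (M (k + 1) ω - M k ω) ∂P = 0 := by
  rw [integral_finsetSum _ fun k _ => hφΔ k]
  exact Finset.sum_eq_zero fun k _ => hM.integral_mul_increment_eq_zero (hφ k) (hφΔ k)

lemma Martingale.integral_mul_increment_mul_mul_increment_eq_zero (hM : Martingale M 𝔽 P)
    {j k : ℕ} (hjk : j ≠ k) {φ ψ : Ω → ℝ} (hφ : StronglyMeasurable[𝔽 j] φ)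
    (hψ : StronglyMeasurable[𝔽 k] ψ) (hφΔ : MemLp (fun ω => φ ω * (M (j + 1) ω - M j ω)) 2 P)
    (hψΔ : MemLp (fun ω => ψ ω * (M (k + 1) ω - M k ω)) 2 P) :
    ∫ ω, (φ ω * (M (j + 1) ω - M j ω)) * (ψ ω * (M (k + 1) ω - M k ω)) ∂P = 0 := by
  wlog hlt : j < k generalizing j k φ ψ
  · simp_rw [mul_comm (φ _ * _)]
    exact this hjk.symm hψ hφ hψΔ hφΔ (hjk.lt_or_gt.resolve_left hlt)
  -- the earlier increment is `𝔽 k`-measurable, so it is pulled out against `M (k + 1) - M k`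
  have hpred : StronglyMeasurable[𝔽 k] fun ω => φ ω * (M (j + 1) ω - M j ω) * ψ ω :=
    ((hφ.mono (𝔽.mono hlt.le)).mul (((hM.stronglyAdapted (j + 1)).mono (𝔽.mono hlt)).sub
      ((hM.stronglyAdapted j).mono (𝔽.mono hlt.le)))).mul hψ
  simp_rw [← mul_assoc]
  exact hM.integral_mul_increment_eq_zero hpred
    ((hφΔ.integrable_mul hψΔ).congr (ae_of_all _ fun ω => by simp only [Pi.mul_apply]; ring))

lemma Martingale.integral_sum_mul_increment_mul_sum (hM : Martingale M 𝔽 P)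
    {φ ψ : ℕ → Ω → ℝ} (hφ : ∀ k, StronglyMeasurable[𝔽 k] (φ k))
    (hψ : ∀ k, StronglyMeasurable[𝔽 k] (ψ k))
    (hφΔ : ∀ k, MemLp (fun ω => φ k ω * (M (k + 1) ω - M k ω)) 2 P)
    (hψΔ : ∀ k, MemLp (fun ω => ψ k ω * (M (k + 1) ω - M k ω)) 2 P) (s : Finset ℕ) :
    ∫ ω, (∑ k ∈ s, φ k ω * (M (k + 1) ω - M k ω)) * ∑ k ∈ s, ψ k ω * (M (k + 1) ω - M k ω) ∂P
      = ∑ k ∈ s, ∫ ω, (φ k ω * (M (k + 1) ω - M k ω)) * (ψ k ω * (M (k + 1) ω - M k ω)) ∂P := by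
  have hint : ∀ j k, Integrable (fun ω =>
      (φ j ω * (M (j + 1) ω - M j ω)) * (ψ k ω * (M (k + 1) ω - M k ω))) P :=
    fun j k => (hφΔ j).integrable_mul (hψΔ k)
  simp_rw [Finset.sum_mul_sum]
  rw [integral_finsetSum _ fun j _ => integrable_finsetSum _ fun k _ => hint j k]
  refine Finset.sum_congr rfl fun j hj => ?_
  rw [integral_finsetSum _ fun k _ => hint j k]
  exact Finset.sum_eq_single_of_mem j hj fun k _ hkj =>
    hM.integral_mul_increment_mul_mul_increment_eq_zero hkj.symm (hφ j) (hψ k) (hφΔ j) (hψΔ k)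

end MeasureTheory

section Existence

variable {Ω : Type*} {mΩ : MeasurableSpace Ω} {P : Measure Ω}
  {𝔽 ℍ : Filtration ℕ mΩ} {M : ℕ → Ω → ℝ} {ξ : Ω → ℝ}

noncomputable def bsdeIntegrand (P : Measure Ω) (ℍ : Filtration ℕ mΩ) (M : ℕ → Ω → ℝ)
    (ξ : Ω → ℝ) (k : ℕ) : Ω → ℝ :=
  condRegCoeff P (ℍ k) ξ fun ω => M (k + 1) ω - M k ω

lemma stronglyMeasurable_bsdeIntegrand (k : ℕ) :
    StronglyMeasurable[ℍ k] (bsdeIntegrand P ℍ M ξ k) :=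
  stronglyMeasurable_condRegCoeff

lemma memLp_bsdeIntegrand_mul [IsFiniteMeasure P] (hle : ∀ k, ℍ k ≤ 𝔽 k)
    (hM2 : ∀ k, MemLp (M k) 2 P) (hξ : MemLp ξ 2 P) (k : ℕ) :
    MemLp (fun ω => bsdeIntegrand P ℍ M ξ k ω * (M (k + 1) ω - M k ω)) 2 P :=
  memLp_condRegCoeff_mul ((hle k).trans (𝔽.le k)) hξ ((hM2 (k + 1)).sub (hM2 k))

lemma integral_sub_sum_bsdeIntegrand_mul_sum_eq_zero [IsFiniteMeasure P] (hle : ∀ k, ℍ k ≤ 𝔽 k)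
    (hM : Martingale M 𝔽 P) (hM2 : ∀ k, MemLp (M k) 2 P) (hξ : MemLp ξ 2 P)
    {φ : ℕ → Ω → ℝ} (hφ : ∀ k, StronglyMeasurable[ℍ k] (φ k))
    (hφΔ : ∀ k, MemLp (fun ω => φ k ω * (M (k + 1) ω - M k ω)) 2 P) (s : Finset ℕ) :
    ∫ ω, (ξ ω - ∑ k ∈ s, bsdeIntegrand P ℍ M ξ k ω * (M (k + 1) ω - M k ω))
      * ∑ k ∈ s, φ k ω * (M (k + 1) ω - M k ω) ∂P = 0 := by
  have hZΔ := memLp_bsdeIntegrand_mul hle hM2 hξ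
  have hI : MemLp (fun ω => ∑ k ∈ s, φ k ω * (M (k + 1) ω - M k ω)) 2 P :=
    memLp_finsetSum _ fun k _ => hφΔ k
  have hξI : Integrable (fun ω => ξ ω * ∑ k ∈ s, φ k ω * (M (k + 1) ω - M k ω)) P :=
    hξ.integrable_mul hI
  have hSI : Integrable (fun ω => (∑ k ∈ s, bsdeIntegrand P ℍ M ξ k ω * (M (k + 1) ω - M k ω))
      * ∑ k ∈ s, φ k ω * (M (k + 1) ω - M k ω)) P :=
    (memLp_finsetSum _ fun k _ => hZΔ k).integrable_mul hI
  have hξI_eq : ∫ ω, ξ ω * ∑ k ∈ s, φ k ω * (M (k + 1) ω - M k ω) ∂P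
      = ∑ k ∈ s, ∫ ω, ξ ω * (φ k ω * (M (k + 1) ω - M k ω)) ∂P := by
    simp_rw [Finset.mul_sum]
    exact integral_finsetSum _ fun k _ => hξ.integrable_mul (hφΔ k)
  simp_rw [sub_mul]
  rw [integral_sub hξI hSI, hξI_eq,
    hM.integral_sum_mul_increment_mul_sum
      (fun k => (stronglyMeasurable_bsdeIntegrand k).mono (hle k)) (fun k => (hφ k).mono (hle k))
      hZΔ hφΔ, sub_eq_zero]
  exact Finset.sum_congr rfl fun k _ => (integral_condRegCoeff_mul_mul ((hle k).trans (𝔽.le k))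
    hξ ((hM2 (k + 1)).sub (hM2 k)) (hφ k) (hφΔ k)).symm

theorem exists_bsdeSol [IsProbabilityMeasure P] (N : ℕ) (hle : ∀ k, ℍ k ≤ 𝔽 k) (h0 : 𝔽 0 = ⊥)
    (hM : Martingale M 𝔽 P) (hM2 : ∀ k, MemLp (M k) 2 P)
    (hξmeas : StronglyMeasurable[𝔽 N] ξ) (hξ2 : MemLp ξ 2 P) :
    ∃ Y Z O : ℕ → Ω → ℝ, BSDESol P 𝔽 ℍ M N ξ Y Z O := by
  set Z := bsdeIntegrand P ℍ M ξ
  have hZ : ∀ k, StronglyMeasurable[ℍ k] (Z k) := stronglyMeasurable_bsdeIntegrand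
  have hZΔ := memLp_bsdeIntegrand_mul hle hM2 hξ2
  have hsum := hM.stronglyAdapted.stronglyMeasurable_sum_mul_increment
    fun k => (hZ k).mono (hle k)
  set G : Ω → ℝ := fun ω => ξ ω - ∑ k ∈ Finset.range N, Z k ω * (M (k + 1) ω - M k ω)
  have hG2 : MemLp G 2 P := hξ2.sub (memLp_finsetSum _ fun k _ => hZΔ k)
  have hG : StronglyMeasurable[𝔽 N] G := hξmeas.sub (hsum N)
  set O : ℕ → Ω → ℝ := fun n ω => P[G|𝔽 n] ω - ∫ ω, G ω ∂P
  have hON : ∀ ω, O N ω = G ω - ∫ ω, G ω ∂P := fun ω => by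
    simp only [O, condExp_of_stronglyMeasurable (𝔽.le N) hG (hG2.integrable one_le_two)]
  have hO : Martingale O 𝔽 P := (martingale_condExp G 𝔽 P).sub (martingale_const 𝔽 P _)
  have hO0 : O 0 =ᵐ[P] 0 := ae_of_all _ fun ω => by simp [O, h0, condExp_bot]
  have hO2 : ∀ n, MemLp (O n) 2 P := fun n => (hG2.condExp one_le_two).sub (memLp_const _)
  set Y : ℕ → Ω → ℝ := fun n ω =>
    ∫ ω, G ω ∂P + ∑ k ∈ Finset.range n, Z k ω * (M (k + 1) ω - M k ω) + O n ω
  have hY : StronglyAdapted 𝔽 Y := fun n =>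
    (stronglyMeasurable_const.add (hsum n)).add (hO.stronglyAdapted n)
  have hY2 : ∀ n, MemLp (Y n) 2 P := fun n =>
    ((memLp_const (∫ ω, G ω ∂P)).add (memLp_finsetSum (Finset.range n) fun k _ => hZΔ k)).add
      (hO2 n)
  refine ⟨Y, Z, O, hY, hY2, hZ, hZΔ, hO, hO0, hO2, fun φ hφ hφΔ => ?_,
    fun n hn => ae_of_all _ fun ω => ?_⟩
  · have hI : MemLp (fun ω => ∑ k ∈ Finset.range N, φ k ω * (M (k + 1) ω - M k ω)) 2 P :=
      memLp_finsetSum _ fun k _ => hφΔ k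
    have hGI : Integrable (fun ω => G ω * ∑ k ∈ Finset.range N, φ k ω * (M (k + 1) ω - M k ω))
        P := hG2.integrable_mul hI
    have hcI : Integrable (fun ω => (∫ ω, G ω ∂P)
        * ∑ k ∈ Finset.range N, φ k ω * (M (k + 1) ω - M k ω)) P :=
      (hI.integrable one_le_two).const_mul _
    simp_rw [hON, sub_mul]
    rw [integral_sub hGI hcI, integral_const_mul,
      hM.integral_sum_mul_increment_eq_zero (fun k => (hφ k).mono (hle k))
        (fun k => (hφΔ k).integrable one_le_two), mul_zero, sub_zero]
    exact integral_sub_sum_bsdeIntegrand_mul_sum_eq_zero hle hM hM2 hξ2 hφ hφΔ _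
  · simp only [Y, hON, G]
    rw [← Finset.sum_range_add_sum_Ico _ hn]
    ring

end Existence

namespace BSDESol

variable {Ω : Type*} {mΩ : MeasurableSpace Ω} {P : Measure Ω}
  {𝔽 ℍ : Filtration ℕ mΩ} {M : ℕ → Ω → ℝ} {N : ℕ} {ξ : Ω → ℝ} {Y Z O Y' Z' O' : ℕ → Ω → ℝ}

lemma memLp_sub_mul_increment (hsol : BSDESol P 𝔽 ℍ M N ξ Y Z O)
    (hsol' : BSDESol P 𝔽 ℍ M N ξ Y' Z' O') (k : ℕ) :
    MemLp (fun ω => (Z k ω - Z' k ω) * (M (k + 1) ω - M k ω)) 2 P := by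
  obtain ⟨-, -, -, hZΔ, -⟩ := hsol
  obtain ⟨-, -, -, hZ'Δ, -⟩ := hsol'
  exact ((hZΔ k).sub (hZ'Δ k)).ae_eq (ae_of_all _ fun ω => by simp only [Pi.sub_apply]; ring)

variable [IsProbabilityMeasure P]

-- `Y 0` is constant, and every term of the equation at time `0` except `ξ` has mean zero
lemma initial_ae_eq_integral (hsol : BSDESol P 𝔽 ℍ M N ξ Y Z O) (hle : ∀ k, ℍ k ≤ 𝔽 k)
    (h0 : 𝔽 0 = ⊥) (hM : Martingale M 𝔽 P) (hξ : Integrable ξ P) :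
    Y 0 =ᵐ[P] fun _ => ∫ ω, ξ ω ∂P := by
  obtain ⟨hY, -, hZ, hZΔ, hO, hO0, hO2, -, heq⟩ := hsol
  obtain ⟨c, hc⟩ := stronglyMeasurable_bot_iff.1 (h0 ▸ hY 0)
  have hZΔ₁ : ∀ k, Integrable (fun ω => Z k ω * (M (k + 1) ω - M k ω)) P := fun k =>
    (hZΔ k).integrable one_le_two
  have hON : ∫ ω, O N ω ∂P = 0 := by
    rw [← integral_condExp (𝔽.le 0), integral_congr_ae ((hO.condExp_ae_eq N.zero_le).trans hO0)]
    simp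
  have hO0' : ∫ ω, O 0 ω ∂P = 0 := by rw [integral_congr_ae hO0]; simp
  have hS : Integrable (fun ω => ∑ k ∈ Finset.Ico 0 N, Z k ω * (M (k + 1) ω - M k ω)) P :=
    integrable_finsetSum _ fun k _ => hZΔ₁ k
  have hξS : Integrable (fun ω => ξ ω - ∑ k ∈ Finset.Ico 0 N, Z k ω * (M (k + 1) ω - M k ω)) P :=
    hξ.sub hS
  have hΔO : Integrable (fun ω => O N ω - O 0 ω) P :=
    ((hO2 N).integrable one_le_two).sub ((hO2 0).integrable one_le_two)
  have hint : ∫ ω, Y 0 ω ∂P = ∫ ω, ξ ω ∂P := by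
    rw [integral_congr_ae (heq 0 N.zero_le), integral_sub hξS hΔO, integral_sub hξ hS,
      integral_sub ((hO2 N).integrable one_le_two) ((hO2 0).integrable one_le_two),
      hM.integral_sum_mul_increment_eq_zero (fun k => (hZ k).mono (hle k)) hZΔ₁, hON, hO0']
    ring
  rw [hc] at hint ⊢
  simp only [integral_const, probReal_univ, smul_eq_mul, one_mul] at hint
  rw [hint]

lemma sub_terminal_ae_eq (hsol : BSDESol P 𝔽 ℍ M N ξ Y Z O)
    (hsol' : BSDESol P 𝔽 ℍ M N ξ Y' Z' O') (hle : ∀ k, ℍ k ≤ 𝔽 k) (h0 : 𝔽 0 = ⊥)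
    (hM : Martingale M 𝔽 P) (hξ : Integrable ξ P) :
    (fun ω => O' N ω - O N ω)
      =ᵐ[P] fun ω => ∑ k ∈ Finset.range N, (Z k ω - Z' k ω) * (M (k + 1) ω - M k ω) := by
  have hY := hsol.initial_ae_eq_integral hle h0 hM hξ
  have hY' := hsol'.initial_ae_eq_integral hle h0 hM hξ
  obtain ⟨-, -, -, -, -, hO0, -, -, heq⟩ := hsol
  obtain ⟨-, -, -, -, -, hO'0, -, -, heq'⟩ := hsol'
  filter_upwards [heq 0 N.zero_le, heq' 0 N.zero_le, hY, hY', hO0, hO'0]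
    with ω h h' hYω hY'ω hOω hO'ω
  simp only [Pi.zero_apply, ← Finset.range_eq_Ico] at h h' hOω hO'ω
  simp only [sub_mul, Finset.sum_sub_distrib]
  linarith

lemma integral_sq_sum_sub_mul_increment_eq_zero (hsol : BSDESol P 𝔽 ℍ M N ξ Y Z O)
    (hsol' : BSDESol P 𝔽 ℍ M N ξ Y' Z' O') (hle : ∀ k, ℍ k ≤ 𝔽 k) (h0 : 𝔽 0 = ⊥)
    (hM : Martingale M 𝔽 P) (hξ : Integrable ξ P) :
    ∫ ω, (∑ k ∈ Finset.range N, (Z k ω - Z' k ω) * (M (k + 1) ω - M k ω)) ^ 2 ∂P = 0 := by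
  have hdiff := hsol.sub_terminal_ae_eq hsol' hle h0 hM hξ
  have hW := hsol.memLp_sub_mul_increment hsol'
  obtain ⟨-, -, hZ, -, -, -, hO2, horth, -⟩ := hsol
  obtain ⟨-, -, hZ', -, -, -, hO'2, horth', -⟩ := hsol'
  have hS := memLp_finsetSum (Finset.range N) fun k _ => hW k
  -- `O' N - O N` is the stochastic integral of `Z - Z'`, which `O` and `O'` are both orthogonal to
  set S := fun ω => ∑ k ∈ Finset.range N, (Z k ω - Z' k ω) * (M (k + 1) ω - M k ω)
  have hO'S : Integrable (fun ω => O' N ω * S ω) P := (hO'2 N).integrable_mul hS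
  have hOS : Integrable (fun ω => O N ω * S ω) P := (hO2 N).integrable_mul hS
  calc ∫ ω, S ω ^ 2 ∂P = ∫ ω, O' N ω * S ω - O N ω * S ω ∂P :=
        integral_congr_ae (hdiff.mono fun ω hω => by dsimp only at hω ⊢; rw [← sub_mul, hω, sq])
    _ = 0 := by
      have hφ : ∀ k, StronglyMeasurable[ℍ k] (Z k - Z' k) := fun k => (hZ k).sub (hZ' k)
      have hO'S₀ : ∫ ω, O' N ω * S ω ∂P = 0 := horth' _ hφ hW
      have hOS₀ : ∫ ω, O N ω * S ω ∂P = 0 := horth _ hφ hW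
      rw [integral_sub hO'S hOS, hO'S₀, hOS₀, sub_zero]

lemma increment_ae_eq (hsol : BSDESol P 𝔽 ℍ M N ξ Y Z O)
    (hsol' : BSDESol P 𝔽 ℍ M N ξ Y' Z' O') (hle : ∀ k, ℍ k ≤ 𝔽 k) (h0 : 𝔽 0 = ⊥)
    (hM : Martingale M 𝔽 P) (hξ : Integrable ξ P) :
    ∀ k < N, (fun ω => Z k ω * (M (k + 1) ω - M k ω))
      =ᵐ[P] fun ω => Z' k ω * (M (k + 1) ω - M k ω) := by
  have hsq := hsol.integral_sq_sum_sub_mul_increment_eq_zero hsol' hle h0 hM hξ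
  have hW := hsol.memLp_sub_mul_increment hsol'
  obtain ⟨-, -, hZ, -⟩ := hsol
  obtain ⟨-, -, hZ', -⟩ := hsol'
  have hZ𝔽 : ∀ k, StronglyMeasurable[𝔽 k] fun ω => Z k ω - Z' k ω := fun k =>
    ((hZ k).sub (hZ' k)).mono (hle k)
  simp_rw [sq] at hsq
  rw [hM.integral_sum_mul_increment_mul_sum (φ := fun k ω => Z k ω - Z' k ω)
    (ψ := fun k ω => Z k ω - Z' k ω) hZ𝔽 hZ𝔽 hW hW] at hsq
  intro k hk
  have hk0 := (Finset.sum_eq_zero_iff_of_nonneg fun j _ => integral_nonneg fun ω =>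
    mul_self_nonneg _).1 hsq k (Finset.mem_range.2 hk)
  rw [integral_eq_zero_iff_of_nonneg (fun ω => mul_self_nonneg _)
    ((hW k).integrable_mul (hW k))] at hk0
  filter_upwards [hk0] with ω hω
  dsimp only [Pi.zero_apply] at hω
  rw [mul_self_eq_zero] at hω
  linarith

lemma sum_mul_increment_ae_eq (hsol : BSDESol P 𝔽 ℍ M N ξ Y Z O)
    (hsol' : BSDESol P 𝔽 ℍ M N ξ Y' Z' O') (hle : ∀ k, ℍ k ≤ 𝔽 k) (h0 : 𝔽 0 = ⊥)
    (hM : Martingale M 𝔽 P) (hξ : Integrable ξ P) {s : Finset ℕ} (hs : ∀ k ∈ s, k < N) :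
    (fun ω => ∑ k ∈ s, Z k ω * (M (k + 1) ω - M k ω))
      =ᵐ[P] fun ω => ∑ k ∈ s, Z' k ω * (M (k + 1) ω - M k ω) := by
  have hinc := hsol.increment_ae_eq hsol' hle h0 hM hξ
  filter_upwards [(eventually_all_finset s).2 fun k hk => hinc k (hs k hk)] with ω hω
  exact Finset.sum_congr rfl hω

lemma martingalePart_ae_eq (hsol : BSDESol P 𝔽 ℍ M N ξ Y Z O)
    (hsol' : BSDESol P 𝔽 ℍ M N ξ Y' Z' O') (hle : ∀ k, ℍ k ≤ 𝔽 k) (h0 : 𝔽 0 = ⊥)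
    (hM : Martingale M 𝔽 P) (hξ : Integrable ξ P) :
    ∀ n ≤ N, O n =ᵐ[P] O' n := by
  have hN : O N =ᵐ[P] O' N := by
    filter_upwards [hsol.sub_terminal_ae_eq hsol' hle h0 hM hξ,
      hsol.sum_mul_increment_ae_eq hsol' hle h0 hM hξ (s := Finset.range N)
        fun k hk => Finset.mem_range.1 hk] with ω hω hsum
    simp only [sub_mul, Finset.sum_sub_distrib] at hω hsum
    linarith
  obtain ⟨-, -, -, -, hO, -⟩ := hsol
  obtain ⟨-, -, -, -, hO', -⟩ := hsol'
  exact fun n hn => (hO.condExp_ae_eq hn).symm.trans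
    ((condExp_congr_ae hN).trans (hO'.condExp_ae_eq hn))

lemma ae_eq (hsol : BSDESol P 𝔽 ℍ M N ξ Y Z O)
    (hsol' : BSDESol P 𝔽 ℍ M N ξ Y' Z' O') (hle : ∀ k, ℍ k ≤ 𝔽 k) (h0 : 𝔽 0 = ⊥)
    (hM : Martingale M 𝔽 P) (hξ : Integrable ξ P) :
    ∀ n ≤ N, Y n =ᵐ[P] Y' n := by
  intro n hn
  have hO := hsol.martingalePart_ae_eq hsol' hle h0 hM hξ
  have hsum := hsol.sum_mul_increment_ae_eq hsol' hle h0 hM hξ (s := Finset.Ico n N)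
    fun k hk => (Finset.mem_Ico.1 hk).2
  obtain ⟨-, -, -, -, -, -, -, -, heq⟩ := hsol
  obtain ⟨-, -, -, -, -, -, -, -, heq'⟩ := hsol'
  filter_upwards [heq n hn, heq' n hn, hO N le_rfl, hO n hn, hsum] with ω hY hY' hON hOn hsumω
  rw [hY, hY', hON, hOn, hsumω]

end BSDESol

/-- Discrete-time linear BSDE under partial information: existence and uniqueness of the
solution when `𝔽 0` is the trivial σ-algebra and `ξ` is square-integrable and
`𝔽 N`-measurable. -/
theorem stmt_10 {Ω : Type*} {mΩ : MeasurableSpace Ω} {P : Measure Ω} [IsProbabilityMeasure P]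
    (N : ℕ) (𝔽 ℍ : Filtration ℕ mΩ) (hle : ∀ k, ℍ k ≤ 𝔽 k)
    (h0 : 𝔽 0 = (⊥ : MeasurableSpace Ω))
    (M : ℕ → Ω → ℝ) (hM : Martingale M 𝔽 P) (hM2 : ∀ k, MemLp (M k) 2 P)
    (ξ : Ω → ℝ) (hξmeas : StronglyMeasurable[𝔽 N] ξ) (hξ2 : MemLp ξ 2 P) :
    (∃ (Y Z O : ℕ → Ω → ℝ), BSDESol P 𝔽 ℍ M N ξ Y Z O) ∧
    (∀ Y Z O Y' Z' O' : ℕ → Ω → ℝ,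
      BSDESol P 𝔽 ℍ M N ξ Y Z O → BSDESol P 𝔽 ℍ M N ξ Y' Z' O' →
      (∀ n ≤ N, Y n =ᵐ[P] Y' n) ∧ (∀ n ≤ N, O n =ᵐ[P] O' n) ∧
      (∀ k < N, (fun ω => Z k ω * (M (k + 1) ω - M k ω)) =ᵐ[P]
        (fun ω => Z' k ω * (M (k + 1) ω - M k ω)))) := by
  have hξ : Integrable ξ P := hξ2.integrable one_le_two
  refine ⟨exists_bsdeSol N hle h0 hM hM2 hξmeas hξ2, fun Y Z O Y' Z' O' hsol hsol' => ?_⟩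
  exact ⟨hsol.ae_eq hsol' hle h0 hM hξ, hsol.martingalePart_ae_eq hsol' hle h0 hM hξ,
    hsol.increment_ae_eq hsol' hle h0 hM hξ⟩
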